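/- In the p-adic field ℚ_p with p odd, the valuation ring ℤ_p is definable without the valuation: x ∈ ℤ_p if and only if there exists y with y² = 1 + p·x². -/

import Mathlib

/-!
For `x ∈ ℤ_p`, `1 + p x²` is congruent to `1` mod `p`, so Hensel's lemma applied to
`X² - (1 + p x²)` at `1` (whose derivative `2` is a unit since `p` is odd) produces a square root.
For `‖x‖ > 1` the term `p x²` dominates, so `‖1 + p x²‖ = ‖p x²‖` is an odd power of `p`,
whereas the norm of a square is an even power of `p`.
-/

open Polynomial

namespace PadicInt

variable {p : ℕ} [Fact p.Prime]

theorem norm_two_eq_one (hp : p ≠ 2) : ‖(2 : ℤ_[p])‖ = 1 := by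
  exact_mod_cast norm_natCast_eq_one_iff.mpr ((Nat.coprime_primes Fact.out Nat.prime_two).mpr hp)

theorem isSquare_of_norm_sub_one_lt (hp : p ≠ 2) {u : ℤ_[p]} (hu : ‖u - 1‖ < 1) :
    IsSquare u := by
  have hnorm : ‖(X ^ 2 - C u).aeval (1 : ℤ_[p])‖ <
      ‖(X ^ 2 - C u).derivative.aeval (1 : ℤ_[p])‖ ^ 2 := by
    simpa [norm_sub_rev, one_add_one_eq_two, norm_two_eq_one hp] using hu
  obtain ⟨z, hz, -⟩ := hensels_lemma hnorm
  exact ⟨z, by simpa [sub_eq_zero, sq, eq_comm] using hz⟩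

end PadicInt

namespace Padic

variable {p : ℕ} [Fact p.Prime]

theorem norm_sq_ne_norm_p_mul_sq {x : ℚ_[p]} (hx : x ≠ 0) (y : ℚ_[p]) :
    ‖y ^ 2‖ ≠ ‖(p : ℚ_[p]) * x ^ 2‖ := by
  have hp0 : (p : ℚ_[p]) ≠ 0 := by exact_mod_cast NeZero.ne p
  have hpx : (p : ℚ_[p]) * x ^ 2 ≠ 0 := mul_ne_zero hp0 (pow_ne_zero 2 hx)
  rcases eq_or_ne y 0 with rfl | hy
  · simpa [eq_comm] using hpx
  have hp1 : (1 : ℝ) < p := mod_cast (Fact.out : p.Prime).one_lt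
  rw [norm_eq_zpow_neg_valuation (pow_ne_zero 2 hy), norm_eq_zpow_neg_valuation hpx, Ne,
    zpow_right_inj₀ (by positivity) hp1.ne', valuation_mul hp0 (pow_ne_zero 2 hx),
    valuation_pow, valuation_pow, valuation_p]
  omega

theorem one_lt_norm_p_mul_sq {x : ℚ_[p]} (hx : 1 < ‖x‖) :
    1 < ‖(p : ℚ_[p]) * x ^ 2‖ := by
  have hp_le : (p : ℝ) ≤ ‖x‖ := not_lt.mp fun h ↦ hx.not_ge <| by
    simpa using (norm_le_pow_iff_norm_lt_pow_add_one x 0).mpr (by simpa using h)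
  have hp1 : (1 : ℝ) < p := mod_cast (Fact.out : p.Prime).one_lt
  rw [norm_mul, norm_pow, norm_p]
  calc (1 : ℝ) < p := hp1
    _ = (p : ℝ)⁻¹ * p ^ 2 := by field_simp
    _ ≤ (p : ℝ)⁻¹ * ‖x‖ ^ 2 := by gcongr

end Padic

/-- For `p` an odd prime, `x ∈ ℤ_p` (i.e. `‖x‖ ≤ 1`) iff `1 + p·x²` is a square in `ℚ_p`. -/
theorem mem_valuationRing_iff_sq {p : ℕ} [Fact p.Prime] (hp : p ≠ 2) (x : ℚ_[p]) :
    ‖x‖ ≤ 1 ↔ ∃ y : ℚ_[p], y ^ 2 = 1 + (p : ℚ_[p]) * x ^ 2 := by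
  constructor
  · intro hx
    obtain ⟨z, rfl⟩ : ∃ z : ℤ_[p], (z : ℚ_[p]) = x := ⟨⟨x, hx⟩, rfl⟩
    obtain ⟨w, hw⟩ := PadicInt.isSquare_of_norm_sub_one_lt hp (u := 1 + p * z ^ 2) <| by
      simpa only [add_sub_cancel_left] using
        (PadicInt.norm_lt_one_iff_dvd _).mpr (dvd_mul_right (p : ℤ_[p]) (z ^ 2))
    exact ⟨w, by simpa [sq] using congrArg ((↑) : ℤ_[p] → ℚ_[p]) hw.symm⟩
  · rintro ⟨y, hy⟩
    by_contra! hx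
    have hdom := Padic.one_lt_norm_p_mul_sq hx
    have hsum : ‖1 + (p : ℚ_[p]) * x ^ 2‖ = ‖(p : ℚ_[p]) * x ^ 2‖ := by
      rw [Padic.add_eq_max_of_ne (by simpa using hdom.ne), norm_one, max_eq_right hdom.le]
    exact Padic.norm_sq_ne_norm_p_mul_sq (norm_pos_iff.mp (one_pos.trans hx)) y (hy ▸ hsum)
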